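/- arXiv:1810.05594 — 9 statements merged into one kernel-verified Lean document; each statement's English description precedes it below -/
import Mathlib

section
/- For fixed x with δ = x^T Σ^{-1} x > 0, as ν → 0⁺ the Student-t density with μ = 0 satisfies lim_{ν→0} f_ν(x|0,Σ) = 0, while the modified quantity (1/2)·Γ(ν/2)·(1+δ/ν)^{ν/2}·f_ν(x|0,Σ) converges to Γ(d/2)/(2 π^{d/2}) · |Σ|^{-1/2} δ^{-d/2}, the density of the projected normal distribution on the sphere. -/
open Real Filter Matrix Topology

/-!
Since `1 + δ/ν = (ν + δ)/ν`, the factor `ν^{-(d+ν)/2}` cancels the `ν^{d/2}` of the normalising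
constant up to `ν^{ν/2} → 1`, so `f_ν` behaves like `Γ(d/2) δ^{-d/2} / (π^{d/2} |Σ|^{1/2})` times
`1/Γ(ν/2)`, and `1/Γ(s) = s/Γ(s+1)` vanishes at `s = 0`. The rescaling by `Γ(ν/2)(1+δ/ν)^{ν/2}/2`
removes exactly the factors `1/Γ(ν/2)` and `ν^{ν/2}(ν+δ)^{-ν/2}`, leaving an expression continuous
at `ν = 0`.
-/

theorem Real.tendsto_rpow_mul_self_nhdsGT_zero (c : ℝ) :
    Tendsto (fun x : ℝ => x ^ (c * x)) (𝓝[>] 0) (𝓝 1) := by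
  have hlog : Tendsto (fun x : ℝ => c * (log x * x)) (𝓝[>] 0) (𝓝 0) := by
    simpa using (tendsto_log_mul_rpow_nhdsGT_zero one_pos).const_mul c
  refine ((continuous_exp.tendsto 0).comp hlog |>.congr' ?_).trans (by rw [exp_zero])
  filter_upwards [self_mem_nhdsWithin] with x hx
  rw [Function.comp_apply, rpow_def_of_pos hx]
  ring_nf

theorem Real.inv_Gamma_eq_div_Gamma_add_one (s : ℝ) : (Gamma s)⁻¹ = s / Gamma (s + 1) := by
  rcases eq_or_ne s 0 with rfl | hs
  · simp
  · rw [Gamma_add_one hs, div_mul_eq_div_div, div_self hs, one_div]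

theorem Real.continuousAt_Gamma_of_pos {s : ℝ} (hs : 0 < s) : ContinuousAt Gamma s :=
  (differentiableOn_Gamma_Ioi.differentiableAt (Ioi_mem_nhds hs)).continuousAt

theorem Real.tendsto_inv_Gamma_nhds_zero : Tendsto (fun s => (Gamma s)⁻¹) (𝓝 0) (𝓝 0) := by
  simp_rw [inv_Gamma_eq_div_Gamma_add_one]
  have hΓ : ContinuousAt (fun s => Gamma (s + 1)) 0 :=
    ContinuousAt.comp (g := Gamma) (by simpa using continuousAt_Gamma_of_pos one_pos)
      (continuous_add_const 1).continuousAt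
  simpa using (continuousAt_id.div₀ hΓ (by simp)).tendsto

-- The densities depend on `Σ` and `x` only through `D = det Σ` and `δ = xᵀ Σ⁻¹ x`;
-- the dimension `d` enters as the real `k`.
noncomputable def studentTDensity (k D δ ν : ℝ) : ℝ :=
  Gamma ((k + ν) / 2) / (Gamma (ν / 2) * (π * ν) ^ (k / 2) * D ^ ((1 : ℝ) / 2)) *
    (1 + δ / ν) ^ (-((k + ν) / 2))

noncomputable def projectedNormalDensity (k D δ : ℝ) : ℝ :=
  Gamma (k / 2) / (2 * π ^ (k / 2)) * D ^ (-(1 : ℝ) / 2) * δ ^ (-k / 2)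

theorem studentTDensity_eq {k D δ ν : ℝ} (hν : 0 < ν) (hδ : 0 ≤ δ) :
    studentTDensity k D δ ν =
      Gamma ((k + ν) / 2) * ν ^ (ν / 2) * (ν + δ) ^ (-((k + ν) / 2)) * (Gamma (ν / 2))⁻¹ /
        (π ^ (k / 2) * D ^ ((1 : ℝ) / 2)) := by
  have hsplit : ν ^ ((k + ν) / 2) = ν ^ (ν / 2) * ν ^ (k / 2) := by
    rw [← rpow_add hν]; ring_nf
  have hνk : ν ^ (k / 2) ≠ 0 := (rpow_pos_of_pos hν _).ne'
  rw [studentTDensity, one_add_div hν.ne', div_rpow (by positivity) hν.le,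
    mul_rpow pi_pos.le hν.le, rpow_neg hν.le, hsplit]
  field_simp

theorem half_Gamma_mul_studentTDensity_eq {k D δ ν : ℝ} (hν : 0 < ν) (hδ : 0 ≤ δ) :
    1 / 2 * Gamma (ν / 2) * (1 + δ / ν) ^ (ν / 2) * studentTDensity k D δ ν =
      Gamma ((k + ν) / 2) * (ν + δ) ^ (-k / 2) / (2 * π ^ (k / 2) * D ^ ((1 : ℝ) / 2)) := by
  have hνδ : 0 < ν + δ := by positivity
  have hmerge : (ν + δ) ^ (ν / 2) * (ν + δ) ^ (-((k + ν) / 2)) = (ν + δ) ^ (-k / 2) := by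
    rw [← rpow_add hνδ]; ring_nf
  have hΓ : Gamma (ν / 2) ≠ 0 := (Gamma_pos_of_pos (by positivity)).ne'
  have hνν : ν ^ (ν / 2) ≠ 0 := (rpow_pos_of_pos hν _).ne'
  rw [studentTDensity_eq hν hδ, one_add_div hν.ne', div_rpow hνδ.le hν.le, ← hmerge]
  field_simp

theorem tendsto_Gamma_add_div_two {k : ℝ} (hk : 0 < k) :
    Tendsto (fun ν => Gamma ((k + ν) / 2)) (𝓝 0) (𝓝 (Gamma (k / 2))) := by
  have hmap : Tendsto (fun ν => (k + ν) / 2) (𝓝 0) (𝓝 (k / 2)) := by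
    simpa using ((continuous_const_add k).div_const 2).tendsto 0
  exact (continuousAt_Gamma_of_pos (half_pos hk)).tendsto.comp hmap

theorem tendsto_studentTDensity_nhdsGT_zero {k D δ : ℝ} (hk : 0 < k) (hδ : 0 < δ) :
    Tendsto (studentTDensity k D δ) (𝓝[>] 0) (𝓝 0) := by
  have hpow : Tendsto (fun ν => (ν + δ) ^ (-((k + ν) / 2))) (𝓝 0) (𝓝 (δ ^ (-(k / 2)))) := by
    have h := ((continuous_add_const δ).tendsto 0).rpow
      (((continuous_const_add k).div_const 2).neg.tendsto 0) (by simp [hδ.ne'])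
    simpa using h
  have hinv : Tendsto (fun ν => (Gamma (ν / 2))⁻¹) (𝓝 0) (𝓝 0) := by
    have hhalf : Tendsto (fun ν : ℝ => ν / 2) (𝓝 0) (𝓝 0) := by
      simpa using (continuous_id.div_const (2 : ℝ)).tendsto 0
    exact tendsto_inv_Gamma_nhds_zero.comp hhalf
  have hself : Tendsto (fun ν : ℝ => ν ^ (ν / 2)) (𝓝[>] 0) (𝓝 1) := by
    simpa [div_eq_inv_mul] using tendsto_rpow_mul_self_nhdsGT_zero (1 / 2)
  have hlim := (((((tendsto_Gamma_add_div_two hk).mono_left nhdsWithin_le_nhds).mul hself).mul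
    (hpow.mono_left nhdsWithin_le_nhds)).mul (hinv.mono_left nhdsWithin_le_nhds)).div_const
    (π ^ (k / 2) * D ^ ((1 : ℝ) / 2))
  rw [mul_zero, zero_div] at hlim
  refine hlim.congr' ?_
  filter_upwards [self_mem_nhdsWithin] with ν hν
  exact (studentTDensity_eq hν hδ.le).symm

theorem tendsto_half_Gamma_mul_studentTDensity_nhdsGT_zero {k D δ : ℝ} (hk : 0 < k) (hD : 0 ≤ D)
    (hδ : 0 < δ) :
    Tendsto (fun ν => 1 / 2 * Gamma (ν / 2) * (1 + δ / ν) ^ (ν / 2) * studentTDensity k D δ ν)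
      (𝓝[>] 0) (𝓝 (projectedNormalDensity k D δ)) := by
  have hpow : Tendsto (fun ν => (ν + δ) ^ (-k / 2)) (𝓝 0) (𝓝 (δ ^ (-k / 2))) := by
    simpa using ((continuous_add_const δ).tendsto 0).rpow_const (p := -k / 2) (by simp [hδ.ne'])
  have hlim := ((tendsto_Gamma_add_div_two hk).mul hpow).div_const
    (2 * π ^ (k / 2) * D ^ ((1 : ℝ) / 2))
  have hval : Gamma (k / 2) * δ ^ (-k / 2) / (2 * π ^ (k / 2) * D ^ ((1 : ℝ) / 2)) =
      projectedNormalDensity k D δ := by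
    rw [projectedNormalDensity, neg_div 2 (1 : ℝ), rpow_neg hD]
    ring
  rw [hval] at hlim
  refine (hlim.mono_left nhdsWithin_le_nhds).congr' ?_
  filter_upwards [self_mem_nhdsWithin] with ν hν
  exact (half_Gamma_mul_studentTDensity_eq hν hδ.le).symm

/-- As `ν → 0⁺`, the Student-t density at a fixed point `x` with `δ = xᵀ Σ⁻¹ x > 0`
tends to zero, while `(1/2) Γ(ν/2) (1+δ/ν)^{ν/2} f_ν(x|0,Σ)` tends to the projected
normal density `Γ(d/2)/(2 π^{d/2}) |Σ|^{-1/2} δ^{-d/2}`. -/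
theorem studentT_density_tendsto_projected_normal
    (d : ℕ) (Sig : Matrix (Fin d) (Fin d) ℝ) (hSig : Sig.PosDef)
    (x : Fin d → ℝ) (hδ : 0 < x ⬝ᵥ Sig⁻¹ *ᵥ x) :
    Tendsto
      (fun ν : ℝ =>
        Real.Gamma ((d + ν) / 2) /
          (Real.Gamma (ν / 2) * (Real.pi * ν) ^ ((d : ℝ) / 2) * Sig.det ^ ((1 : ℝ) / 2)) *
          (1 + (x ⬝ᵥ Sig⁻¹ *ᵥ x) / ν) ^ (-((d + ν) / 2)))
      (nhdsWithin 0 (Set.Ioi 0)) (nhds 0) ∧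
    Tendsto
      (fun ν : ℝ =>
        (1 / 2) * Real.Gamma (ν / 2) * (1 + (x ⬝ᵥ Sig⁻¹ *ᵥ x) / ν) ^ (ν / 2) *
        (Real.Gamma ((d + ν) / 2) /
          (Real.Gamma (ν / 2) * (Real.pi * ν) ^ ((d : ℝ) / 2) * Sig.det ^ ((1 : ℝ) / 2)) *
          (1 + (x ⬝ᵥ Sig⁻¹ *ᵥ x) / ν) ^ (-((d + ν) / 2))))
      (nhdsWithin 0 (Set.Ioi 0))
      (nhds (Real.Gamma ((d : ℝ) / 2) / (2 * Real.pi ^ ((d : ℝ) / 2)) *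
        Sig.det ^ (-(1 : ℝ) / 2) * (x ⬝ᵥ Sig⁻¹ *ᵥ x) ^ (-(d : ℝ) / 2))) := by
  have hd : (0 : ℝ) < d := by
    rcases Nat.eq_zero_or_pos d with rfl | hd
    · simp at hδ
    · exact_mod_cast hd
  exact ⟨tendsto_studentTDensity_nhdsGT_zero hd hδ,
    tendsto_half_Gamma_mul_studentTDensity_nhdsGT_zero hd hSig.det_pos.le hδ⟩
end

section
/- Let x = (cos φ, sin φ)^T and Σ a 2×2 symmetric positive definite matrix with entries σ₁₁, σ₁₂, σ₂₂. Then x^T Σ^{-1} x = (1 - ζ₁ cos(2φ) - ζ₂ sin(2φ)) / (√|Σ| · √(1 - ζ₁² - ζ₂²)), where ζ₁ = (σ₁₁ - σ₂₂)/(σ₁₁ + σ₂₂) and ζ₂ = 2σ₁₂/(σ₁₁ + σ₂₂). -/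
/-!
By the adjugate formula, `xᵀ Σ⁻¹ x = (σ₂₂ cos² φ - 2 σ₁₂ cos φ sin φ + σ₁₁ sin² φ) / |Σ|`, and the
double-angle formulas turn the numerator into `(tr Σ / 2) (1 - ζ₁ cos 2φ - ζ₂ sin 2φ)`. Since
`1 - ζ₁² - ζ₂² = 4 |Σ| / (tr Σ)²`, the denominator `√|Σ| √(1 - ζ₁² - ζ₂²)` equals `2 |Σ| / tr Σ`.
-/

open Real Matrix

theorem dotProduct_inv_mulVec_fin_two_symm {K : Type*} [Field K] (a b p q r : K) :
    ![a, b] ⬝ᵥ !![p, q; q, r]⁻¹ *ᵥ ![a, b]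
      = (r * a ^ 2 - 2 * q * a * b + p * b ^ 2) / (p * r - q * q) := by
  rw [inv_def, adjugate_fin_two_of, det_fin_two_of, Ring.inverse_eq_inv']
  simp only [dotProduct, mulVec, Fin.sum_univ_two, Matrix.smul_apply, of_apply, cons_val',
    cons_val_zero, cons_val_one, cons_val_fin_one, smul_eq_mul]
  ring

theorem mul_cos_sq_sub_mul_cos_mul_sin_add_mul_sin_sq (p q r φ : ℝ) :
    r * cos φ ^ 2 - 2 * q * cos φ * sin φ + p * sin φ ^ 2
      = ((p + r) - (p - r) * cos (2 * φ) - 2 * q * sin (2 * φ)) / 2 := by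
  rw [cos_two_mul, sin_two_mul]
  linear_combination p * sin_sq_add_cos_sq φ

theorem sqrt_mul_sqrt_one_sub_sq_sub_sq {p q r : ℝ} (hd : 0 < p * r - q * q) (ht : 0 < p + r) :
    √(p * r - q * q) * √(1 - ((p - r) / (p + r)) ^ 2 - (2 * q / (p + r)) ^ 2)
      = 2 * (p * r - q * q) / (p + r) := by
  have hζ : 1 - ((p - r) / (p + r)) ^ 2 - (2 * q / (p + r)) ^ 2
      = (2 / (p + r)) ^ 2 * (p * r - q * q) := by
    field_simp
    ring
  rw [hζ, sqrt_mul (by positivity), sqrt_sq (by positivity), mul_left_comm, mul_self_sqrt hd.le]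
  ring

/-- For `x = (cos φ, sin φ)ᵀ` and a symmetric positive definite `2×2` matrix `Σ`,
`xᵀ Σ⁻¹ x = (1 - ζ₁ cos 2φ - ζ₂ sin 2φ)/(√|Σ| √(1-ζ₁²-ζ₂²))` where
`ζ₁ = (σ₁₁-σ₂₂)/(σ₁₁+σ₂₂)` and `ζ₂ = 2σ₁₂/(σ₁₁+σ₂₂)`. -/
theorem quadratic_form_circle_param
    (σ11 σ12 σ22 φ : ℝ)
    (hSig : (Matrix.of ![![σ11, σ12], ![σ12, σ22]] : Matrix (Fin 2) (Fin 2) ℝ).PosDef) :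
    (![Real.cos φ, Real.sin φ] ⬝ᵥ
        (Matrix.of ![![σ11, σ12], ![σ12, σ22]] : Matrix (Fin 2) (Fin 2) ℝ)⁻¹ *ᵥ
        ![Real.cos φ, Real.sin φ])
      = (1 - ((σ11 - σ22) / (σ11 + σ22)) * Real.cos (2 * φ)
            - (2 * σ12 / (σ11 + σ22)) * Real.sin (2 * φ)) /
        (Real.sqrt ((Matrix.of ![![σ11, σ12], ![σ12, σ22]] : Matrix (Fin 2) (Fin 2) ℝ).det) *
          Real.sqrt (1 - ((σ11 - σ22) / (σ11 + σ22)) ^ 2 - (2 * σ12 / (σ11 + σ22)) ^ 2)) := by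
  have hdet : 0 < σ11 * σ22 - σ12 * σ12 := by
    simpa only [det_fin_two_of] using hSig.det_pos
  have htr : 0 < σ11 + σ22 := by simpa only [trace_fin_two_of] using hSig.trace_pos
  rw [det_fin_two_of, sqrt_mul_sqrt_one_sub_sq_sub_sq hdet htr,
    dotProduct_inv_mulVec_fin_two_symm, mul_cos_sq_sub_mul_cos_mul_sin_add_mul_sin_sq]
  field_simp
end

section
/- Under Assumption A (any ≤ d of the samples are linearly independent, and (d-1)·max_i w_i < (ν+d-1)/(ν+d)), for every linear subspace V ⊂ ℝ^d with 0 ≤ dim V ≤ d-1, the total weight of samples lying in V satisfies ∑_{i: x_i ∈ V} w_i < (ν + dim V)/(ν + d); moreover n ≥ d. -/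
open Real Matrix Finset Classical

open scoped Classical

/-!
At most `d` samples are always linearly independent, so a subspace `V` with `dim V = k < d`
contains at most `k` of them. Each weight is below `(ν + d - 1) / ((d - 1) (ν + d))`, and `k ≤ d - 1`
of these stay below `(ν + k) / (ν + d)`. For `n ≥ d`, apply this to the span of all samples: its
dimension is at most `n`, and their total weight `1` is not below `(ν + dim) / (ν + d) ≤ 1`.
-/

theorem card_filter_mem_le_finrank {ι K M : Type*} [Fintype ι] [DivisionRing K] [AddCommGroup M]
    [Module K M] (x : ι → M) (V : Submodule K M) [FiniteDimensional K V]
    (hx : ∀ s : Finset ι, #s = Module.finrank K V + 1 → LinearIndependent K (fun i : s => x i)) :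
    #{i | x i ∈ V} ≤ Module.finrank K V := by
  by_contra! hcard
  obtain ⟨s, hsV, hs⟩ := exists_subset_card_eq (Nat.succ_le_of_lt hcard)
  have hmem : ∀ i : s, x i ∈ V := fun i => (mem_filter.mp (hsV i.2)).2
  have hliV : LinearIndependent K (fun i : s => (⟨x i, hmem i⟩ : V)) :=
    .of_comp V.subtype (hx s hs)
  have := hliV.fintype_card_le_finrank
  rw [Fintype.card_coe, hs] at this
  omega

theorem sum_lt_of_card_le {ι : Type*} (s : Finset ι) (w : ι → ℝ) {d k : ℕ} {ν : ℝ}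
    (hν : 0 < ν) (hs : #s ≤ k) (hkd : k < d)
    (hw : ∀ i ∈ s, ((d : ℝ) - 1) * w i < (ν + d - 1) / (ν + d)) :
    ∑ i ∈ s, w i < (ν + k) / (ν + d) := by
  rcases s.eq_empty_or_nonempty with rfl | hne
  · rw [sum_empty]
    positivity
  have hd : (1 : ℝ) ≤ d - 1 := by
    have : 2 ≤ d := by have := hne.card_pos; omega
    rw [le_sub_iff_add_le]
    exact_mod_cast this
  have hk : (k : ℝ) ≤ d - 1 := by
    rw [le_sub_iff_add_le]
    exact_mod_cast hkd
  refine lt_of_mul_lt_mul_left ?_ (by linarith : (0 : ℝ) ≤ d - 1)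
  calc ((d : ℝ) - 1) * ∑ i ∈ s, w i
      = ∑ i ∈ s, ((d : ℝ) - 1) * w i := mul_sum _ _ _
    _ < ∑ _i ∈ s, (ν + d - 1) / (ν + d) := sum_lt_sum_of_nonempty hne hw
    _ = #s * ((ν + d - 1) / (ν + d)) := by rw [sum_const, nsmul_eq_mul]
    _ ≤ k * ((ν + d - 1) / (ν + d)) := by
      gcongr
      exact div_nonneg (by linarith) (by linarith)
    _ ≤ ((d : ℝ) - 1) * ((ν + k) / (ν + d)) := by
      rw [mul_div_assoc', mul_div_assoc']
      exact div_le_div_of_nonneg_right (by nlinarith) (by positivity)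

theorem weight_in_subspace_lt_general
    (d n : ℕ) (ν : ℝ) (hν : 0 < ν)
    (x : Fin n → Fin d → ℝ)
    (w : Fin n → ℝ) (hw1 : ∑ i, w i = 1)
    (hli : ∀ s : Finset (Fin n), s.card ≤ d →
      LinearIndependent ℝ (fun i : s => x i))
    (hwmax : ∀ i, ((d : ℝ) - 1) * w i < (ν + d - 1) / (ν + d)) :
    (∀ V : Submodule ℝ (Fin d → ℝ), Module.finrank ℝ V < d →
      ∑ i ∈ Finset.univ.filter (fun i => x i ∈ V), w i
        < (ν + (Module.finrank ℝ V : ℝ)) / (ν + d)) ∧ n ≥ d := by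
  have weight_lt : ∀ V : Submodule ℝ (Fin d → ℝ), Module.finrank ℝ V < d →
      ∑ i ∈ Finset.univ.filter (fun i => x i ∈ V), w i
        < (ν + (Module.finrank ℝ V : ℝ)) / (ν + d) := fun V hV =>
    sum_lt_of_card_le _ w hν (card_filter_mem_le_finrank x V fun s hs => hli s (by omega)) hV
      fun i _ => hwmax i
  refine ⟨weight_lt, ?_⟩
  by_contra! hnd
  set V := Submodule.span ℝ (Set.range x)
  have hVd : Module.finrank ℝ V < d :=
    (finrank_range_le_card x).trans_lt (by rwa [Fintype.card_fin])
  have hlt := weight_lt V hVd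
  have hxV (i : Fin n) : x i ∈ V := Submodule.subset_span (Set.mem_range_self i)
  rw [filter_true_of_mem fun i _ => hxV i, hw1,
    lt_div_iff₀ (by positivity)] at hlt
  have : (Module.finrank ℝ V : ℝ) < d := by exact_mod_cast hVd
  linarith

/-- Under Assumption A (any `≤ d` samples linearly independent, and
`(d-1)·max wᵢ < (ν+d-1)/(ν+d)`), for every proper linear subspace `V` of `ℝ^d`
the total weight of samples lying in `V` is `< (ν + dim V)/(ν + d)`, and `n ≥ d`. -/
theorem weight_in_subspace_lt
    (d n : ℕ) (ν : ℝ) (hν : 0 < ν)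
    (x : Fin n → Fin d → ℝ)
    (w : Fin n → ℝ) (hw : ∀ i, 0 < w i) (hw1 : ∑ i, w i = 1)
    (hli : ∀ s : Finset (Fin n), s.card ≤ d →
      LinearIndependent ℝ (fun i : s => x i))
    (hwmax : ∀ i, ((d : ℝ) - 1) * w i < (ν + d - 1) / (ν + d)) :
    (∀ V : Submodule ℝ (Fin d → ℝ), Module.finrank ℝ V < d →
      ∑ i ∈ Finset.univ.filter (fun i => x i ∈ V), w i
        < (ν + (Module.finrank ℝ V : ℝ)) / (ν + d)) ∧ n ≥ d :=
  weight_in_subspace_lt_general d n ν hν x w hw1 hli hwmax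
end

section
/- If any subset of ≤ d samples is linearly independent and there exists a critical point Σ ∈ SPD(d) of L, then for every linear subspace V ⊂ ℝ^d with dim V ≤ d-1, the weight of samples in V satisfies ∑_{i: x_i ∈ V} w_i ≤ (ν + dim V)/(d + ν). -/
open Real Matrix Finset

open scoped Classical

/-!
Put `y i = S x i` and `c i = (d + ν) w i / (ν + |y i|²)`; since `S` is symmetric with
`S² = Σ⁻¹`, stationarity says exactly that `I = ∑ c i • y i y iᵀ`. Taking traces against this
identity gives `tr P = ∑ c i ⟨y i, P y i⟩` for every matrix `P`. For `P = I` this yields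
`∑ c i |y i|² = d`, which together with `∑ w i = 1` forces `∑ c i = 1`. For `P` the orthogonal
projection onto `S V`, the samples in `V` contribute `c i |y i|²` and all others contribute
something nonnegative, so `∑_{x i ∈ V} c i |y i|² ≤ dim V`; rewriting `c i |y i|²` as
`(d + ν) w i - ν c i` and using `∑ c i ≤ 1` gives the bound.
-/

section Frame

variable {m ι : Type*} [Fintype m] [DecidableEq m] [Fintype ι]

theorem Submodule.exists_posSemidef_trace_eq_finrank_mulVec_eq_self
    (W : Submodule ℝ (m → ℝ)) :
    ∃ P : Matrix m m ℝ, P.PosSemidef ∧ P.trace = Module.finrank ℝ W ∧ ∀ u ∈ W, P *ᵥ u = u := by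
  let e := WithLp.linearEquiv 2 ℝ (m → ℝ)
  let K : Submodule ℝ (EuclideanSpace ℝ m) := W.map e.symm.toLinearMap
  refine ⟨toEuclideanLin.symm K.starProjection.toLinearMap, ?_, ?_, ?_⟩
  · rw [← Matrix.isPositive_toEuclideanLin_iff, LinearEquiv.apply_symm_apply]
    exact K.isSymmetricProjection_starProjection.isPositive
  · have hK := (LinearMap.IsIdempotentElem.isProj_range _
      (ContinuousLinearMap.IsIdempotentElem.toLinearMap K.isIdempotentElem_starProjection)).trace
    rw [K.range_starProjection, (e.symm.submoduleMap W).symm.finrank_eq] at hK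
    rw [← hK, toEuclideanLin_eq_toLin_orthonormal, ← LinearMap.toMatrix_symm,
      LinearEquiv.symm_symm, ← LinearMap.trace_eq_matrix_trace]
  · intro u hu
    have hKu := K.starProjection_eq_self_iff.mpr
      (Submodule.mem_map_of_mem (f := e.symm.toLinearMap) hu)
    change WithLp.ofLp (toEuclideanLin (toEuclideanLin.symm K.starProjection.toLinearMap)
      (WithLp.toLp 2 u)) = u
    rw [LinearEquiv.apply_symm_apply]
    exact congrArg WithLp.ofLp hKu

theorem Matrix.trace_eq_sum_of_one_eq_sum_vecMulVec {R : Type*} [CommSemiring R]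
    {c : ι → R} {y : ι → m → R} (hframe : (1 : Matrix m m R) = ∑ i, c i • vecMulVec (y i) (y i))
    (P : Matrix m m R) : P.trace = ∑ i, c i * (y i ⬝ᵥ P *ᵥ y i) := by
  conv_lhs => rw [← Matrix.mul_one P, hframe]
  simp only [Matrix.mul_sum, Matrix.mul_smul, trace_sum, trace_smul, mul_vecMulVec,
    trace_vecMulVec, smul_eq_mul, dotProduct_comm (P *ᵥ _)]

variable {c : ι → ℝ} {y : ι → m → ℝ}

theorem Matrix.sum_mul_dotProduct_self_eq_card_of_one_eq_sum_vecMulVec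
    (hframe : (1 : Matrix m m ℝ) = ∑ i, c i • vecMulVec (y i) (y i)) :
    ∑ i, c i * (y i ⬝ᵥ y i) = Fintype.card m := by
  simpa using (trace_eq_sum_of_one_eq_sum_vecMulVec hframe 1).symm

theorem Matrix.sum_mul_dotProduct_self_le_finrank_of_one_eq_sum_vecMulVec
    (hframe : (1 : Matrix m m ℝ) = ∑ i, c i • vecMulVec (y i) (y i)) (hc : ∀ i, 0 ≤ c i)
    (W : Submodule ℝ (m → ℝ)) {s : Finset ι} (hs : ∀ i ∈ s, y i ∈ W) :
    ∑ i ∈ s, c i * (y i ⬝ᵥ y i) ≤ Module.finrank ℝ W := by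
  obtain ⟨P, hP, htrace, hPW⟩ := W.exists_posSemidef_trace_eq_finrank_mulVec_eq_self
  rw [← htrace, trace_eq_sum_of_one_eq_sum_vecMulVec hframe P]
  calc ∑ i ∈ s, c i * (y i ⬝ᵥ y i) = ∑ i ∈ s, c i * (y i ⬝ᵥ P *ᵥ y i) :=
        sum_congr rfl fun i hi => by rw [hPW _ (hs i hi)]
    _ ≤ ∑ i, c i * (y i ⬝ᵥ P *ᵥ y i) :=
        sum_le_sum_of_subset_of_nonneg (subset_univ s) fun i _ _ =>
          mul_nonneg (hc i) (by simpa using hP.dotProduct_mulVec_nonneg (y i))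

end Frame

theorem sum_le_of_mul_add_eq_mul {ι : Type*} [Fintype ι] {d k ν : ℝ} (hd : 0 ≤ d) (hν : 0 < ν)
    {w q c : ι → ℝ} (hc : ∀ i, 0 ≤ c i) (hcq : ∀ i, c i * (ν + q i) = (d + ν) * w i)
    (hw1 : ∑ i, w i = 1) (htot : ∑ i, c i * q i = d) {s : Finset ι}
    (hs : ∑ i ∈ s, c i * q i ≤ k) : ∑ i ∈ s, w i ≤ (ν + k) / (d + ν) := by
  have hcq' : ∀ i, c i * q i = (d + ν) * w i - ν * c i := fun i => by linarith [hcq i]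
  simp only [hcq', sum_sub_distrib, ← mul_sum, hw1] at htot hs
  have hsum : ∑ i, c i = 1 := mul_left_cancel₀ hν.ne' (by linarith)
  have hsub : ∑ i ∈ s, c i ≤ ∑ i, c i :=
    sum_le_sum_of_subset_of_nonneg (subset_univ s) fun i _ _ => hc i
  rw [le_div_iff₀ (by linarith)]
  linarith [mul_le_mul_of_nonneg_left (hsub.trans hsum.le) hν.le]

theorem weight_in_subspace_le_of_critical_point_general
    (d n : ℕ) (ν : ℝ) (hν : 0 < ν)
    (x : Fin n → Fin d → ℝ)
    (w : Fin n → ℝ) (hw : ∀ i, 0 < w i) (hw1 : ∑ i, w i = 1)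
    (Sig S : Matrix (Fin d) (Fin d) ℝ)
    (hS : S.PosDef) (hSsq : S * S = Sig⁻¹)
    (hstat : (1 : Matrix (Fin d) (Fin d) ℝ)
      = ((d : ℝ) + ν) • ∑ i, (w i / (ν + x i ⬝ᵥ Sig⁻¹ *ᵥ x i)) •
          (S * Matrix.vecMulVec (x i) (x i) * S)) :
    ∀ V : Submodule ℝ (Fin d → ℝ), Module.finrank ℝ V < d →
      ∑ i ∈ Finset.univ.filter (fun i => x i ∈ V), w i
        ≤ (ν + (Module.finrank ℝ V : ℝ)) / ((d : ℝ) + ν) := by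
  intro V _
  have hSx : ∀ u, u ᵥ* S = S *ᵥ u := fun u => by
    rw [← vecMul_transpose, ← conjTranspose_eq_transpose_of_trivial, hS.isHermitian.eq]
  have hq : ∀ i, x i ⬝ᵥ Sig⁻¹ *ᵥ x i = S *ᵥ x i ⬝ᵥ S *ᵥ x i := fun i => by
    rw [← hSsq, ← mulVec_mulVec, dotProduct_mulVec, hSx]
  set c : Fin n → ℝ := fun i => ((d : ℝ) + ν) * (w i / (ν + S *ᵥ x i ⬝ᵥ S *ᵥ x i))
  have hden : ∀ i, 0 < ν + S *ᵥ x i ⬝ᵥ S *ᵥ x i := fun i =>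
    add_pos_of_pos_of_nonneg hν (dotProduct_self_star_nonneg _)
  have hc : ∀ i, 0 ≤ c i := fun i => by have := hw i; have := hden i; positivity
  have hframe : (1 : Matrix (Fin d) (Fin d) ℝ)
      = ∑ i, c i • vecMulVec (S *ᵥ x i) (S *ᵥ x i) := by
    simp only [hstat, hq, smul_sum, smul_smul, mul_vecMulVec, vecMulVec_mul, hSx, c]
  have hSV : ∀ i ∈ univ.filter (fun i => x i ∈ V), S *ᵥ x i ∈ V.map (toLin' S) :=
    fun i hi => ⟨x i, (mem_filter.mp hi).2, rfl⟩
  refine sum_le_of_mul_add_eq_mul (Nat.cast_nonneg d) hν hc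
    (fun i => by simp only [c]; field_simp [(hden i).ne']) hw1
    ((sum_mul_dotProduct_self_eq_card_of_one_eq_sum_vecMulVec hframe).trans (by simp)) ?_
  calc _ ≤ (Module.finrank ℝ (V.map (toLin' S)) : ℝ) :=
        sum_mul_dotProduct_self_le_finrank_of_one_eq_sum_vecMulVec hframe hc _ hSV
    _ ≤ Module.finrank ℝ V := by exact_mod_cast Submodule.finrank_map_le _ _

/-- If any `≤ d` samples are linearly independent and `L` has a critical point
`Σ ∈ SPD(d)` (stationarity written with `S = Σ^{-1/2}`), then for every proper
linear subspace `V` the weight of samples in `V` is `≤ (ν + dim V)/(d + ν)`. -/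
theorem weight_in_subspace_le_of_critical_point
    (d n : ℕ) (ν : ℝ) (hν : 0 < ν)
    (x : Fin n → Fin d → ℝ) (hx : ∀ i, x i ≠ 0)
    (w : Fin n → ℝ) (hw : ∀ i, 0 < w i) (hw1 : ∑ i, w i = 1)
    (hli : ∀ s : Finset (Fin n), s.card ≤ d →
      LinearIndependent ℝ (fun i : s => x i))
    (Sig S : Matrix (Fin d) (Fin d) ℝ) (hSig : Sig.PosDef)
    (hS : S.PosDef) (hSsq : S * S = Sig⁻¹)
    (hstat : (1 : Matrix (Fin d) (Fin d) ℝ)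
      = ((d : ℝ) + ν) • ∑ i, (w i / (ν + x i ⬝ᵥ Sig⁻¹ *ᵥ x i)) •
          (S * Matrix.vecMulVec (x i) (x i) * S)) :
    ∀ V : Submodule ℝ (Fin d → ℝ), Module.finrank ℝ V < d →
      ∑ i ∈ Finset.univ.filter (fun i => x i ∈ V), w i
        ≤ (ν + (Module.finrank ℝ V : ℝ)) / ((d : ℝ) + ν) :=
  weight_in_subspace_le_of_critical_point_general d n ν hν x w hw hw1 Sig S hS hSsq hstat
end

section
/- For ν > 0 and μ = 0, if the samples and weights satisfy Assumption A, then the function L(Σ) = (d+ν)∑ w_i log(ν + x_i^T Σ^{-1} x_i) + log|Σ| has at most one critical point in SPD(d): if Σ₁, Σ₂ ∈ SPD(d) both satisfy the fixed-point equation Σ = (d+ν)∑_i w_i x_i x_i^T/(ν + x_i^T Σ^{-1} x_i), then Σ₁ = Σ₂. -/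
/-!
Let `t` be the minimum of `vᵀΣ₁v / vᵀΣ₂v`, attained at `v₀`, so that `t • Σ₂ ≤ Σ₁` in the Loewner
order with equality in the direction `v₀`. If `t < 1`, inverting gives
`t · xᵢᵀΣ₁⁻¹xᵢ ≤ xᵢᵀΣ₂⁻¹xᵢ`, and because `ν > 0` every weight `wᵢ / (ν + xᵢᵀΣ₁⁻¹xᵢ)` of `Σ₁`
strictly exceeds `t` times the corresponding weight of `Σ₂`. Comparing the two fixed-point
expansions at `v₀` then forces `xᵢ ⬝ᵥ v₀ = 0` for every `i`, so `v₀ᵀΣ₁v₀ = 0`, which is absurd.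
Hence `Σ₂ ≤ Σ₁`, and by symmetry `Σ₁ = Σ₂`.
-/

open Matrix Finset Function
open scoped MatrixOrder

namespace Matrix

variable {m ι : Type*} [Fintype m]

lemma le_iff_dotProduct_mulVec_le {A B : Matrix m m ℝ} (hA : A.IsHermitian)
    (hB : B.IsHermitian) : A ≤ B ↔ ∀ v, v ⬝ᵥ A *ᵥ v ≤ v ⬝ᵥ B *ᵥ v := by
  simp only [le_iff, posSemidef_iff_dotProduct_mulVec, hB.sub hA, true_and, star_trivial,
    sub_mulVec, dotProduct_sub, sub_nonneg]

lemma PosDef.dotProduct_mulVec_pos_real {A : Matrix m m ℝ} (hA : A.PosDef) {v : m → ℝ}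
    (hv : v ≠ 0) : 0 < v ⬝ᵥ A *ᵥ v := by
  simpa using hA.dotProduct_mulVec_pos hv

lemma PosSemidef.dotProduct_mulVec_nonneg_real {A : Matrix m m ℝ} (hA : A.PosSemidef)
    (v : m → ℝ) : 0 ≤ v ⬝ᵥ A *ᵥ v := by
  simpa using hA.dotProduct_mulVec_nonneg v

lemma IsHermitian.dotProduct_mulVec_comm {A : Matrix m m ℝ} (hA : A.IsHermitian)
    (u v : m → ℝ) : u ⬝ᵥ A *ᵥ v = v ⬝ᵥ A *ᵥ u := by
  rw [dotProduct_mulVec, ← mulVec_transpose, (isHermitian_iff_isSymm.mp hA).eq, dotProduct_comm]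

lemma smul_dotProduct_mulVec_smul (A : Matrix m m ℝ) (s : ℝ) (v : m → ℝ) :
    (s • v) ⬝ᵥ A *ᵥ (s • v) = s ^ 2 * (v ⬝ᵥ A *ᵥ v) := by
  rw [mulVec_smul, smul_dotProduct, dotProduct_smul, smul_eq_mul, smul_eq_mul, sq, mul_assoc]

lemma dotProduct_sum_smul_vecMulVec_mulVec [Fintype ι] (a : ι → ℝ) (x : ι → m → ℝ)
    (v : m → ℝ) :
    v ⬝ᵥ (∑ i, a i • vecMulVec (x i) (x i)) *ᵥ v = ∑ i, a i * (x i ⬝ᵥ v) ^ 2 := by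
  simp only [sum_mulVec, dotProduct_sum, smul_mulVec, dotProduct_smul, vecMulVec_mulVec,
    smul_eq_mul]
  simp [dotProduct_comm v, sq]

lemma PosDef.inv_le_inv_of_le [DecidableEq m] {A B : Matrix m m ℝ} (hA : A.PosDef)
    (hAB : A ≤ B) : B⁻¹ ≤ A⁻¹ := by
  have hB : B.PosDef := by simpa using hA.add_posSemidef hAB
  rw [le_iff_dotProduct_mulVec_le hB.inv.isHermitian hA.inv.isHermitian]
  intro v
  set u := B⁻¹ *ᵥ v
  set u' := A⁻¹ *ᵥ v
  have hBu : B *ᵥ u = v := by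
    rw [mulVec_mulVec, mul_nonsing_inv _ hB.det_pos.ne'.isUnit, one_mulVec]
  have hAu' : A *ᵥ u' = v := by
    rw [mulVec_mulVec, mul_nonsing_inv _ hA.det_pos.ne'.isUnit, one_mulVec]
  -- complete the square: `0 ≤ (u - u')ᵀA(u - u') = uᵀAu - 2uᵀv + vᵀA⁻¹v`,
  -- while `uᵀAu ≤ uᵀBu = uᵀv`
  have hsq := hA.posSemidef.dotProduct_mulVec_nonneg_real (u - u')
  have hexpand : (u - u') ⬝ᵥ A *ᵥ (u - u') = u ⬝ᵥ A *ᵥ u - 2 * (u ⬝ᵥ v) + v ⬝ᵥ u' := by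
    rw [mulVec_sub, hAu', dotProduct_sub, sub_dotProduct, sub_dotProduct,
      hA.isHermitian.dotProduct_mulVec_comm u', hAu', dotProduct_comm u' v]
    ring
  have hAB' := (le_iff_dotProduct_mulVec_le hA.isHermitian hB.isHermitian).mp hAB u
  rw [hBu] at hAB'
  rw [dotProduct_comm v u]
  linarith

/-- `t` is the minimum of the generalized Rayleigh quotient `vᵀAv / vᵀBv` over the unit sphere. -/
lemma PosDef.exists_smul_le_of_dotProduct_mulVec_eq [Nonempty m] {A B : Matrix m m ℝ}
    (hA : A.IsHermitian) (hB : B.PosDef) :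
    ∃ t : ℝ, t • B ≤ A ∧ ∃ v ≠ 0, v ⬝ᵥ A *ᵥ v = t * (v ⬝ᵥ B *ᵥ v) := by
  set S := Metric.sphere (0 : m → ℝ) 1
  have hS : ∀ u ∈ S, u ≠ 0 := fun u hu => ne_zero_of_mem_unit_sphere ⟨u, hu⟩
  let f : (m → ℝ) → ℝ := fun u => (u ⬝ᵥ A *ᵥ u) / (u ⬝ᵥ B *ᵥ u)
  have hf : ContinuousOn f S := ContinuousOn.div (by fun_prop) (by fun_prop)
    fun u hu => (hB.dotProduct_mulVec_pos_real (hS u hu)).ne'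
  obtain ⟨v, hvS, hmin⟩ := (isCompact_sphere 0 1).exists_isMinOn
    (NormedSpace.sphere_nonempty.mpr zero_le_one) hf
  have hBv := hB.dotProduct_mulVec_pos_real (hS v hvS)
  refine ⟨f v, ?_, v, hS v hvS, (div_mul_cancel₀ _ hBv.ne').symm⟩
  rw [le_iff_dotProduct_mulVec_le (hB.isHermitian.smul (IsSelfAdjoint.all _)) hA]
  intro u
  rcases eq_or_ne u 0 with rfl | hu
  · simp
  have hmin_u := hmin (show ‖u‖⁻¹ • u ∈ S by simp [S, norm_smul, hu])
  simp only [f, Set.mem_ofPred_eq, smul_dotProduct_mulVec_smul] at hmin_u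
  rw [mul_div_mul_left _ _ (by positivity), le_div_iff₀ (hB.dotProduct_mulVec_pos_real hu)]
    at hmin_u
  simpa [smul_mulVec, dotProduct_smul] using hmin_u

end Matrix

lemma mul_div_add_lt_div_add {t ν w q₁ q₂ : ℝ} (ht : 0 < t) (ht1 : t < 1) (hν : 0 < ν)
    (hw : 0 < w) (hq₁ : 0 ≤ q₁) (hq : t * q₁ ≤ q₂) : t * (w / (ν + q₂)) < w / (ν + q₁) := by
  have h : t * (ν + q₁) < ν + q₂ := by nlinarith
  rw [← mul_div_assoc, div_lt_div_iff₀ (by nlinarith) (by linarith)]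
  nlinarith

lemma eq_zero_of_sum_mul_sq_eq {ι : Type*} [Fintype ι] {a b y : ι → ℝ} (hba : ∀ i, b i < a i)
    (h : ∑ i, a i * y i ^ 2 = ∑ i, b i * y i ^ 2) (i : ι) : y i = 0 := by
  have hsum : ∑ i, (a i - b i) * y i ^ 2 = 0 := by simp [sub_mul, sum_sub_distrib, h]
  have hi := (sum_eq_zero_iff_of_nonneg fun j _ =>
    mul_nonneg (sub_pos.2 (hba j)).le (sq_nonneg (y j))).mp hsum i (mem_univ i)
  exact pow_eq_zero_iff two_ne_zero |>.mp ((mul_eq_zero.mp hi).resolve_left (sub_pos.2 (hba i)).ne')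

section StudentTScatter

variable {m ι : Type*} [Fintype m] [DecidableEq m] [Fintype ι]
  {c ν : ℝ} {w : ι → ℝ} {x : ι → m → ℝ}

/-- With `c = d + ν`, its fixed points are the critical points of the Student-t scatter
likelihood `L`. -/
noncomputable def studentTScatterMap (c ν : ℝ) (w : ι → ℝ) (x : ι → m → ℝ)
    (S : Matrix m m ℝ) : Matrix m m ℝ :=
  c • ∑ i, (w i / (ν + x i ⬝ᵥ S⁻¹ *ᵥ x i)) • vecMulVec (x i) (x i)

lemma dotProduct_studentTScatterMap_mulVec (S : Matrix m m ℝ) (v : m → ℝ) :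
    v ⬝ᵥ studentTScatterMap c ν w x S *ᵥ v =
      c * ∑ i, w i / (ν + x i ⬝ᵥ S⁻¹ *ᵥ x i) * (x i ⬝ᵥ v) ^ 2 := by
  rw [studentTScatterMap, smul_mulVec, dotProduct_smul, smul_eq_mul,
    dotProduct_sum_smul_vecMulVec_mulVec]

lemma Function.IsFixedPt.dotProduct_mulVec_of_studentTScatterMap {S : Matrix m m ℝ}
    (h : IsFixedPt (studentTScatterMap c ν w x) S) (v : m → ℝ) :
    v ⬝ᵥ S *ᵥ v = c * ∑ i, w i / (ν + x i ⬝ᵥ S⁻¹ *ᵥ x i) * (x i ⬝ᵥ v) ^ 2 := by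
  rw [← dotProduct_studentTScatterMap_mulVec, h]

theorem one_le_of_smul_le_of_isFixedPt_studentTScatterMap (hν : 0 < ν) (hw : ∀ i, 0 < w i)
    {S₁ S₂ : Matrix m m ℝ} (hS₁ : S₁.PosDef) (hS₂ : S₂.PosDef)
    (h₁ : IsFixedPt (studentTScatterMap c ν w x) S₁)
    (h₂ : IsFixedPt (studentTScatterMap c ν w x) S₂) {t : ℝ} (ht : t • S₂ ≤ S₁)
    {v : m → ℝ} (hv : v ≠ 0) (htv : v ⬝ᵥ S₁ *ᵥ v = t * (v ⬝ᵥ S₂ *ᵥ v)) : 1 ≤ t := by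
  have hpos₁ := hS₁.dotProduct_mulVec_pos_real hv
  have ht0 : 0 < t :=
    pos_of_mul_pos_left (htv ▸ hpos₁) (hS₂.dotProduct_mulVec_pos_real hv).le
  by_contra! ht1
  have hq : ∀ i, t * (x i ⬝ᵥ S₁⁻¹ *ᵥ x i) ≤ x i ⬝ᵥ S₂⁻¹ *ᵥ x i := by
    have hinv := (hS₂.smul ht0).inv_le_inv_of_le ht
    let := invertibleOfNonzero ht0.ne'
    rw [Matrix.inv_smul S₂ t hS₂.det_pos.ne'.isUnit, invOf_eq_inv,
      le_iff_dotProduct_mulVec_le hS₁.inv.isHermitian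
        (hS₂.inv.isHermitian.smul (IsSelfAdjoint.all _))] at hinv
    intro i
    simpa [smul_mulVec, dotProduct_smul, ← le_inv_mul_iff₀ ht0] using hinv (x i)
  have hcoef : ∀ i, t * (w i / (ν + x i ⬝ᵥ S₂⁻¹ *ᵥ x i)) < w i / (ν + x i ⬝ᵥ S₁⁻¹ *ᵥ x i) :=
    fun i => mul_div_add_lt_div_add ht0 ht1 hν (hw i)
      (hS₁.inv.posSemidef.dotProduct_mulVec_nonneg_real (x i)) (hq i)
  rw [h₁.dotProduct_mulVec_of_studentTScatterMap] at hpos₁ htv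
  rw [h₂.dotProduct_mulVec_of_studentTScatterMap, mul_left_comm] at htv
  have hperp := eq_zero_of_sum_mul_sq_eq hcoef <| by
    rw [mul_left_cancel₀ (left_ne_zero_of_mul hpos₁.ne') htv, mul_sum]
    simp only [mul_assoc]
  simp [hperp] at hpos₁

theorem le_of_isFixedPt_studentTScatterMap (hν : 0 < ν) (hw : ∀ i, 0 < w i)
    {S₁ S₂ : Matrix m m ℝ} (hS₁ : S₁.PosDef) (hS₂ : S₂.PosDef)
    (h₁ : IsFixedPt (studentTScatterMap c ν w x) S₁)
    (h₂ : IsFixedPt (studentTScatterMap c ν w x) S₂) : S₂ ≤ S₁ := by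
  rcases isEmpty_or_nonempty m with hm | hm
  · exact (Subsingleton.elim S₂ S₁).le
  obtain ⟨t, ht, v, hv, htv⟩ := hS₂.exists_smul_le_of_dotProduct_mulVec_eq hS₁.isHermitian
  have h1t := one_le_of_smul_le_of_isFixedPt_studentTScatterMap hν hw hS₁ hS₂ h₁ h₂ ht hv htv
  refine le_trans ?_ ht
  rw [le_iff_dotProduct_mulVec_le hS₂.isHermitian
    (hS₂.isHermitian.smul (IsSelfAdjoint.all _))]
  intro u
  rw [smul_mulVec, dotProduct_smul, smul_eq_mul]
  exact le_mul_of_one_le_left (hS₂.posSemidef.dotProduct_mulVec_nonneg_real u) h1t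

theorem eq_of_isFixedPt_studentTScatterMap (hν : 0 < ν) (hw : ∀ i, 0 < w i)
    {S₁ S₂ : Matrix m m ℝ} (hS₁ : S₁.PosDef) (hS₂ : S₂.PosDef)
    (h₁ : IsFixedPt (studentTScatterMap c ν w x) S₁)
    (h₂ : IsFixedPt (studentTScatterMap c ν w x) S₂) : S₁ = S₂ :=
  le_antisymm (le_of_isFixedPt_studentTScatterMap hν hw hS₂ hS₁ h₂ h₁)
    (le_of_isFixedPt_studentTScatterMap hν hw hS₁ hS₂ h₁ h₂)

end StudentTScatter

theorem studentT_scatter_unique_critical_point_general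
    (d n : ℕ) (ν : ℝ) (hν : 0 < ν)
    (x : Fin n → Fin d → ℝ)
    (w : Fin n → ℝ) (hw : ∀ i, 0 < w i)
    (Sig1 Sig2 : Matrix (Fin d) (Fin d) ℝ) (hSig1 : Sig1.PosDef) (hSig2 : Sig2.PosDef)
    (hfix1 : Sig1 = ((d : ℝ) + ν) • ∑ i, (w i / (ν + x i ⬝ᵥ Sig1⁻¹ *ᵥ x i)) •
      Matrix.vecMulVec (x i) (x i))
    (hfix2 : Sig2 = ((d : ℝ) + ν) • ∑ i, (w i / (ν + x i ⬝ᵥ Sig2⁻¹ *ᵥ x i)) •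
      Matrix.vecMulVec (x i) (x i)) :
    Sig1 = Sig2 :=
  eq_of_isFixedPt_studentTScatterMap hν hw hSig1 hSig2 hfix1.symm hfix2.symm

/-- Uniqueness of the scatter critical point for `ν > 0`, `μ = 0`: under
Assumption A, if `Σ₁, Σ₂ ∈ SPD(d)` both satisfy the fixed-point equation
`Σ = (d+ν) ∑ᵢ wᵢ xᵢxᵢᵀ/(ν + xᵢᵀΣ⁻¹xᵢ)`, then `Σ₁ = Σ₂`. -/
theorem studentT_scatter_unique_critical_point
    (d n : ℕ) (ν : ℝ) (hν : 0 < ν)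
    (x : Fin n → Fin d → ℝ)
    (w : Fin n → ℝ) (hw : ∀ i, 0 < w i) (hw1 : ∑ i, w i = 1)
    (hli : ∀ s : Finset (Fin n), s.card ≤ d →
      LinearIndependent ℝ (fun i : s => x i))
    (hwmax : ∀ i, ((d : ℝ) - 1) * w i < (ν + d - 1) / (ν + d))
    (Sig1 Sig2 : Matrix (Fin d) (Fin d) ℝ) (hSig1 : Sig1.PosDef) (hSig2 : Sig2.PosDef)
    (hfix1 : Sig1 = ((d : ℝ) + ν) • ∑ i, (w i / (ν + x i ⬝ᵥ Sig1⁻¹ *ᵥ x i)) •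
      Matrix.vecMulVec (x i) (x i))
    (hfix2 : Sig2 = ((d : ℝ) + ν) • ∑ i, (w i / (ν + x i ⬝ᵥ Sig2⁻¹ *ᵥ x i)) •
      Matrix.vecMulVec (x i) (x i)) :
    Sig1 = Sig2 :=
  studentT_scatter_unique_critical_point_general d n ν hν x w hw Sig1 Sig2 hSig1 hSig2 hfix1 hfix2
end

section
/- Fix ν > 0 and d ≥ 1. On SPD(d), the function g(X) = ((d+ν)/ν - tr(X)/ν)^ν · det(X), defined on {X ∈ SPD(d) : 0 < tr(X) < d+ν}, attains its maximum value 1 uniquely at X = I; in particular g(X) ≤ 1 for all SPD matrices X with tr(X) < d+ν. -/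
/-!
Write `t = ((d+ν) - tr X)/ν`, so that `ν (t - 1) + (tr X - d) = 0`. Taking logarithms,
`log g(X) = ν log t + ∑ log λᵢ` over the eigenvalues `λᵢ` of `X`, and `log x ≤ x - 1` (with equality
only at `x = 1`) bounds this by `ν (t - 1) + ∑ (λᵢ - 1) = 0`. Equality forces every `λᵢ = 1`, i.e.
`X = I`.
-/

open Real Matrix Finset

lemma Real.log_eq_sub_one_iff {x : ℝ} (hx : 0 < x) : log x = x - 1 ↔ x = 1 :=
  ⟨fun h => by_contra fun hne => (log_lt_sub_one_of_pos hx hne).ne h, by rintro rfl; simp⟩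

lemma Matrix.IsHermitian.eq_one_of_eigenvalues_eq_one {n 𝕜 : Type*} [Fintype n] [DecidableEq n]
    [RCLike 𝕜] {A : Matrix n n 𝕜} (hA : A.IsHermitian) (h : ∀ i, hA.eigenvalues i = 1) :
    A = 1 := by
  rw [hA.spectral_theorem, show hA.eigenvalues = 1 from funext h]
  simp

namespace Matrix.PosDef

variable {n : Type*} [Fintype n] [DecidableEq n] {X : Matrix n n ℝ}

lemma log_det_eq_sum_log_eigenvalues (hX : X.PosDef) :
    log X.det = ∑ i, log (hX.isHermitian.eigenvalues i) := by
  rw [hX.isHermitian.det_eq_prod_eigenvalues]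
  exact log_prod fun i _ => (hX.eigenvalues_pos i).ne'

lemma trace_sub_card_eq_sum_eigenvalues_sub_one (hX : X.PosDef) :
    X.trace - Fintype.card n = ∑ i, (hX.isHermitian.eigenvalues i - 1) := by
  rw [hX.isHermitian.trace_eq_sum_eigenvalues, sum_sub_distrib]
  simp

theorem log_det_le_trace_sub_card (hX : X.PosDef) : log X.det ≤ X.trace - Fintype.card n := by
  rw [hX.log_det_eq_sum_log_eigenvalues, hX.trace_sub_card_eq_sum_eigenvalues_sub_one]
  exact sum_le_sum fun i _ => log_le_sub_one_of_pos (hX.eigenvalues_pos i)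

theorem log_det_eq_trace_sub_card_iff (hX : X.PosDef) :
    log X.det = X.trace - Fintype.card n ↔ X = 1 := by
  refine ⟨fun h => ?_, by rintro rfl; simp⟩
  rw [hX.log_det_eq_sum_log_eigenvalues, hX.trace_sub_card_eq_sum_eigenvalues_sub_one,
    sum_eq_sum_iff_of_le fun i _ => log_le_sub_one_of_pos (hX.eigenvalues_pos i)] at h
  exact hX.isHermitian.eq_one_of_eigenvalues_eq_one fun i =>
    (log_eq_sub_one_iff (hX.eigenvalues_pos i)).1 (h i (mem_univ i))

end Matrix.PosDef

theorem spd_trace_det_function_max_general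
    (d : ℕ) (ν : ℝ) (hν : 0 < ν) :
    ∀ X : Matrix (Fin d) (Fin d) ℝ, X.PosDef → X.trace < (d : ℝ) + ν →
      (((d : ℝ) + ν) / ν - X.trace / ν) ^ ν * X.det ≤ 1 ∧
      ((((d : ℝ) + ν) / ν - X.trace / ν) ^ ν * X.det = 1 ↔ X = 1) := by
  intro X hX htr
  set t := ((d : ℝ) + ν) / ν - X.trace / ν with ht_def
  have ht : 0 < t := by rw [ht_def, div_sub_div_same]; exact div_pos (by linarith) hν
  have hbalance : ν * (t - 1) + (X.trace - d) = 0 := by rw [ht_def]; field_simp; ring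
  have hg : 0 < t ^ ν * X.det := mul_pos (rpow_pos_of_pos ht ν) hX.det_pos
  have hlog_g : log (t ^ ν * X.det) = ν * log t + log X.det := by
    rw [log_mul (rpow_pos_of_pos ht ν).ne' hX.det_pos.ne', log_rpow ht]
  have hlog_t : ν * log t ≤ ν * (t - 1) := by gcongr; exact log_le_sub_one_of_pos ht
  have hlog_det : log X.det ≤ X.trace - d := by simpa using hX.log_det_le_trace_sub_card
  have hlog_det_eq : log X.det = X.trace - d ↔ X = 1 := by
    simpa using hX.log_det_eq_trace_sub_card_iff
  have ht_of_eq_one : X = 1 → t = 1 := by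
    rintro rfl
    simp only [ht_def, trace_one, Fintype.card_fin]
    field_simp
    ring
  constructor
  · rw [← log_nonpos_iff hg.le]
    linarith
  · calc t ^ ν * X.det = 1 ↔ log (t ^ ν * X.det) = ν * (t - 1) + (X.trace - d) :=
          ⟨fun h => by rw [h, log_one, hbalance],
            fun h => eq_one_of_pos_of_log_eq_zero hg (h.trans hbalance)⟩
      _ ↔ log t = t - 1 ∧ log X.det = X.trace - d := by
          rw [hlog_g, add_eq_add_iff_eq_and_eq hlog_t hlog_det, mul_right_inj' hν.ne']
      _ ↔ X = 1 := by
          rw [log_eq_sub_one_iff ht, hlog_det_eq]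
          exact and_iff_right_of_imp ht_of_eq_one

/-- On `{X ∈ SPD(d) : tr X < d + ν}` the function
`g(X) = ((d+ν)/ν - tr(X)/ν)^ν det X` satisfies `g(X) ≤ 1`, with
equality exactly at `X = I` (where the maximum value `1` is attained). -/
theorem spd_trace_det_function_max
    (d : ℕ) (hd : 1 ≤ d) (ν : ℝ) (hν : 0 < ν) :
    ∀ X : Matrix (Fin d) (Fin d) ℝ, X.PosDef → X.trace < (d : ℝ) + ν →
      (((d : ℝ) + ν) / ν - X.trace / ν) ^ ν * X.det ≤ 1 ∧
      ((((d : ℝ) + ν) / ν - X.trace / ν) ^ ν * X.det = 1 ↔ X = 1) :=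
  spd_trace_det_function_max_general d ν hν
end

section
/- (Monotone descent of the GMMF location update) Fix Σ ∈ SPD(d) and ν > 0. Given μ, define μ' = [∑_i w_i x_i/(ν+δ_i)] / [∑_i w_i/(ν+δ_i)] where δ_i = (x_i-μ)^T Σ^{-1}(x_i-μ). Then L(μ',Σ) - L(μ,Σ) ≤ (d+ν) log(1 - ‖S₁‖²/((d+ν)S₀)) ≤ 0, where S₀ = (d+ν)∑w_i/(ν+δ_i) and S₁ = (d+ν)∑w_i R^{-1}(x_i-μ)/(ν+δ_i) with Σ = RR^T; equality holds iff μ' = μ. -/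
open Real Matrix Finset

/-!
Whiten by the Cholesky factor: with `zᵢ = R⁻¹(xᵢ - μ)` and `c = R⁻¹(μ' - μ)` the Mahalanobis
distances become `δᵢ = ‖zᵢ‖²` and `δ'ᵢ = ‖zᵢ - c‖²`, and `c` is the mean of the `zᵢ` for the
weights `aᵢ = wᵢ/(ν + δᵢ)`. The parallel-axis identity then gives
`∑ wᵢ (ν + δ'ᵢ)/(ν + δᵢ) = ∑ aᵢ (ν + ‖zᵢ - c‖²) = 1 - (∑ aᵢ)‖c‖²`, which is the argument of the
logarithm on the right, and Jensen's inequality for the concave `log` bounds the loss difference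
`(d+ν) ∑ wᵢ log ((ν + δ'ᵢ)/(ν + δᵢ))` by `(d+ν)` times its logarithm. That logarithm is
negative unless `c = 0`, i.e. `μ' = μ`.
-/

namespace Matrix

variable {m ι K : Type*} [Fintype m]

theorem dotProduct_self_nonneg [Ring K] [LinearOrder K] [IsStrictOrderedRing K] (v : m → K) :
    0 ≤ v ⬝ᵥ v :=
  Fintype.sum_nonneg fun i => mul_self_nonneg (v i)

theorem add_dotProduct_self_pos [Ring K] [LinearOrder K] [IsStrictOrderedRing K] {ν : K}
    (hν : 0 < ν) (v : m → K) : 0 < ν + v ⬝ᵥ v :=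
  add_pos_of_pos_of_nonneg hν (dotProduct_self_nonneg v)

theorem dotProduct_mulVec_inv_mul_transpose [DecidableEq m] [CommRing K] (R : Matrix m m K)
    (v : m → K) : v ⬝ᵥ (R * Rᵀ)⁻¹ *ᵥ v = (R⁻¹ *ᵥ v) ⬝ᵥ (R⁻¹ *ᵥ v) := by
  rw [mul_inv_rev, ← transpose_nonsing_inv, ← mulVec_mulVec, dotProduct_mulVec, vecMul_transpose]

theorem sum_mul_dotProduct_sub_of_sum_smul_eq [CommRing K] (s : Finset ι) {a : ι → K}
    {z : ι → m → K} {c : m → K} (hc : (∑ i ∈ s, a i) • c = ∑ i ∈ s, a i • z i) :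
    ∑ i ∈ s, a i * ((z i - c) ⬝ᵥ (z i - c)) =
      ∑ i ∈ s, a i * (z i ⬝ᵥ z i) - (∑ i ∈ s, a i) * (c ⬝ᵥ c) := by
  have hterm : ∀ i, a i * ((z i - c) ⬝ᵥ (z i - c)) =
      a i * (z i ⬝ᵥ z i) - 2 * ((a i • z i) ⬝ᵥ c) + a i * (c ⬝ᵥ c) := fun i => by
    simp only [sub_dotProduct, dotProduct_sub, smul_dotProduct, smul_eq_mul, dotProduct_comm c]
    ring
  rw [sum_congr rfl fun i _ => hterm i, sum_add_distrib, sum_sub_distrib, ← mul_sum,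
    ← sum_dotProduct, ← hc, smul_dotProduct, smul_eq_mul, ← sum_mul]
  ring

theorem sum_mul_add_dotProduct_sub_eq_one_sub [Fintype ι] [CommRing K] {ν : K} {w a : ι → K}
    {z : ι → m → K} {c : m → K} (hwa : ∀ i, w i = a i * (ν + z i ⬝ᵥ z i))
    (hw1 : ∑ i, w i = 1) (hc : (∑ i, a i) • c = ∑ i, a i • z i) :
    ∑ i, a i * (ν + (z i - c) ⬝ᵥ (z i - c)) = 1 - (∑ i, a i) * (c ⬝ᵥ c) := by
  simp only [← hw1, hwa, mul_add, sum_add_distrib, sum_mul_dotProduct_sub_of_sum_smul_eq _ hc]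
  ring

theorem sum_smul_mulVec_centerMass_sub [Field K] {l : Type*} (Q : Matrix l m K) (s : Finset ι)
    {a : ι → K} (x : ι → m → K) (μ : m → K) (ha : ∑ i ∈ s, a i ≠ 0) :
    (∑ i ∈ s, a i) • Q *ᵥ (s.centerMass a x - μ) = ∑ i ∈ s, a i • Q *ᵥ (x i - μ) := by
  rw [← mulVec_smul, smul_sub, centerMass, smul_inv_smul₀ ha, sum_smul, ← sum_sub_distrib,
    mulVec_sum]
  simp only [← smul_sub, mulVec_smul]

theorem log_one_sub_mul_dotProduct_self_nonpos {A : ℝ} {c : m → ℝ} (hA : 0 ≤ A)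
    (hpos : 0 < 1 - A * (c ⬝ᵥ c)) : log (1 - A * (c ⬝ᵥ c)) ≤ 0 :=
  log_nonpos hpos.le (sub_le_self _ (mul_nonneg hA (dotProduct_self_nonneg c)))

theorem log_one_sub_mul_dotProduct_self_neg {A : ℝ} {c : m → ℝ} (hA : 0 < A)
    (hpos : 0 < 1 - A * (c ⬝ᵥ c)) (hc : c ≠ 0) : log (1 - A * (c ⬝ᵥ c)) < 0 := by
  have hcc : 0 < c ⬝ᵥ c :=
    (dotProduct_self_nonneg c).lt_of_ne (Ne.symm (dotProduct_self_eq_zero.not.mpr hc))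
  exact log_neg hpos (sub_lt_self _ (mul_pos hA hcc))

end Matrix

theorem Real.sum_mul_log_le_log_sum_mul {ι : Type*} (s : Finset ι) {w p : ι → ℝ}
    (hw : ∀ i ∈ s, 0 ≤ w i) (hw1 : ∑ i ∈ s, w i = 1) (hp : ∀ i ∈ s, 0 < p i) :
    ∑ i ∈ s, w i * log (p i) ≤ log (∑ i ∈ s, w i * p i) := by
  simpa using strictConcaveOn_log_Ioi.concaveOn.le_map_sum hw hw1 hp

section Whitened

variable {ι m : Type*} [Fintype ι] [Fintype m] {ν : ℝ} {w : ι → ℝ} {z : ι → m → ℝ} {c : m → ℝ}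

theorem one_sub_sum_div_mul_dotProduct_self_pos (hν : 0 < ν) (hw : ∀ i, 0 < w i)
    (hw1 : ∑ i, w i = 1)
    (hc : (∑ i, w i / (ν + z i ⬝ᵥ z i)) • c = ∑ i, (w i / (ν + z i ⬝ᵥ z i)) • z i) :
    0 < 1 - (∑ i, w i / (ν + z i ⬝ᵥ z i)) * (c ⬝ᵥ c) := by
  have hb (v : m → ℝ) := add_dotProduct_self_pos hν v
  rw [← sum_mul_add_dotProduct_sub_eq_one_sub (fun i => (div_mul_cancel₀ _ (hb (z i)).ne').symm)
    hw1 hc]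
  exact sum_pos (fun i _ => mul_pos (div_pos (hw i) (hb _)) (hb _))
    (nonempty_of_sum_ne_zero (by rw [hw1]; exact one_ne_zero))

theorem sum_mul_log_sub_sum_mul_log_le (hν : 0 < ν) (hw : ∀ i, 0 ≤ w i) (hw1 : ∑ i, w i = 1)
    (hc : (∑ i, w i / (ν + z i ⬝ᵥ z i)) • c = ∑ i, (w i / (ν + z i ⬝ᵥ z i)) • z i) :
    ∑ i, w i * log (ν + (z i - c) ⬝ᵥ (z i - c)) - ∑ i, w i * log (ν + z i ⬝ᵥ z i) ≤
      log (1 - (∑ i, w i / (ν + z i ⬝ᵥ z i)) * (c ⬝ᵥ c)) := by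
  have hb (v : m → ℝ) := add_dotProduct_self_pos hν v
  calc ∑ i, w i * log (ν + (z i - c) ⬝ᵥ (z i - c)) - ∑ i, w i * log (ν + z i ⬝ᵥ z i)
      = ∑ i, w i * log ((ν + (z i - c) ⬝ᵥ (z i - c)) / (ν + z i ⬝ᵥ z i)) := by
        rw [← sum_sub_distrib]
        refine sum_congr rfl fun i _ => ?_
        rw [log_div (hb _).ne' (hb _).ne']
        ring
    _ ≤ log (∑ i, w i * ((ν + (z i - c) ⬝ᵥ (z i - c)) / (ν + z i ⬝ᵥ z i))) :=
        sum_mul_log_le_log_sum_mul _ (fun i _ => hw i) hw1 fun i _ => div_pos (hb _) (hb _)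
    _ = log (1 - (∑ i, w i / (ν + z i ⬝ᵥ z i)) * (c ⬝ᵥ c)) := by
        rw [← sum_mul_add_dotProduct_sub_eq_one_sub
          (fun i => (div_mul_cancel₀ _ (hb (z i)).ne').symm) hw1 hc]
        simp only [mul_div_assoc', div_mul_eq_mul_div]

end Whitened

theorem gmmf_location_update_descent_general
    (d n : ℕ) (ν : ℝ) (hν : 0 < ν)
    (x : Fin n → Fin d → ℝ)
    (w : Fin n → ℝ) (hw : ∀ i, 0 < w i) (hw1 : ∑ i, w i = 1)
    (Sig R : Matrix (Fin d) (Fin d) ℝ)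
    (hR : Sig = R * Rᵀ) (hRdet : IsUnit R.det)
    (μ μ' : Fin d → ℝ)
    (δ : Fin n → ℝ) (hδ : ∀ i, δ i = (x i - μ) ⬝ᵥ Sig⁻¹ *ᵥ (x i - μ))
    (hupd : μ' = (∑ i, w i / (ν + δ i))⁻¹ • ∑ i, (w i / (ν + δ i)) • x i)
    (L : (Fin d → ℝ) → Matrix (Fin d) (Fin d) ℝ → ℝ)
    (hL : ∀ (m : Fin d → ℝ) (M : Matrix (Fin d) (Fin d) ℝ),
      L m M = ((d : ℝ) + ν) * (∑ i, w i * Real.log (ν + (x i - m) ⬝ᵥ M⁻¹ *ᵥ (x i - m)))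
        + Real.log M.det)
    (S0 : ℝ) (hS0 : S0 = ((d : ℝ) + ν) * ∑ i, w i / (ν + δ i))
    (S1 : Fin d → ℝ)
    (hS1 : S1 = ((d : ℝ) + ν) • ∑ i, (w i / (ν + δ i)) • (R⁻¹ *ᵥ (x i - μ))) :
    L μ' Sig - L μ Sig ≤ ((d : ℝ) + ν) * Real.log (1 - (S1 ⬝ᵥ S1) / (((d : ℝ) + ν) * S0)) ∧
    ((d : ℝ) + ν) * Real.log (1 - (S1 ⬝ᵥ S1) / (((d : ℝ) + ν) * S0)) ≤ 0 ∧
    (L μ' Sig = L μ Sig ↔ μ' = μ) := by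
  subst hR
  set z : Fin n → Fin d → ℝ := fun i => R⁻¹ *ᵥ (x i - μ)
  obtain rfl : δ = fun i => z i ⬝ᵥ z i :=
    funext fun i => by rw [hδ, dotProduct_mulVec_inv_mul_transpose]
  set A := ∑ i, w i / (ν + z i ⬝ᵥ z i)
  set c := R⁻¹ *ᵥ (μ' - μ)
  have hA : 0 < A := sum_pos
    (fun i _ => div_pos (hw i) (add_dotProduct_self_pos hν _))
    (nonempty_of_sum_ne_zero (by rw [hw1]; exact one_ne_zero))
  have hc : A • c = ∑ i, (w i / (ν + z i ⬝ᵥ z i)) • z i := by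
    subst hupd
    exact sum_smul_mulVec_centerMass_sub _ _ _ _ hA.ne'
  have hloss : L μ' (R * Rᵀ) - L μ (R * Rᵀ) = ((d : ℝ) + ν) *
      (∑ i, w i * log (ν + (z i - c) ⬝ᵥ (z i - c)) - ∑ i, w i * log (ν + z i ⬝ᵥ z i)) := by
    have hz' (i : Fin n) : R⁻¹ *ᵥ (x i - μ') = z i - c := by
      rw [← mulVec_sub, sub_sub_sub_cancel_right]
    simp only [hL, dotProduct_mulVec_inv_mul_transpose, hz']
    ring
  have hT : 1 - S1 ⬝ᵥ S1 / (((d : ℝ) + ν) * S0) = 1 - A * (c ⬝ᵥ c) := by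
    rw [hS0, hS1, ← hc]
    simp only [smul_dotProduct, dotProduct_smul, smul_eq_mul]
    field_simp
  have hTpos := one_sub_sum_div_mul_dotProduct_self_pos hν hw hw1 hc
  have hD := sum_mul_log_sub_sum_mul_log_le hν (fun i => (hw i).le) hw1 hc
  have hd : 0 < (d : ℝ) + ν := by positivity
  rw [hT, hloss]
  refine ⟨mul_le_mul_of_nonneg_left hD hd.le,
    mul_nonpos_of_nonneg_of_nonpos hd.le (log_one_sub_mul_dotProduct_self_nonpos hA.le hTpos),
    fun h => ?_, fun h => by rw [h]⟩
  by_contra hne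
  have hRinv : IsUnit R⁻¹ := isUnit_nonsing_inv_iff.mpr ((isUnit_iff_isUnit_det R).mpr hRdet)
  have hc0 : c ≠ 0 := by
    simpa using (mulVec_injective_of_isUnit hRinv).ne (sub_ne_zero.mpr hne)
  have hlog := log_one_sub_mul_dotProduct_self_neg hA hTpos hc0
  linarith [mul_neg_of_pos_of_neg hd (hD.trans_lt hlog)]

/-- Monotone descent of the GMMF location update: with
`μ' = (∑ᵢ wᵢ xᵢ/(ν+δᵢ)) / (∑ᵢ wᵢ/(ν+δᵢ))`, `S₀ = (d+ν)∑ᵢ wᵢ/(ν+δᵢ)`,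
`S₁ = (d+ν)∑ᵢ wᵢ R⁻¹(xᵢ-μ)/(ν+δᵢ)` (`Σ = RRᵀ` a Cholesky factorization),
one has `L(μ',Σ) - L(μ,Σ) ≤ (d+ν) log(1 - ‖S₁‖²/((d+ν)S₀)) ≤ 0`,
with equality iff `μ' = μ`. -/
theorem gmmf_location_update_descent
    (d n : ℕ) (ν : ℝ) (hν : 0 < ν)
    (x : Fin n → Fin d → ℝ)
    (w : Fin n → ℝ) (hw : ∀ i, 0 < w i) (hw1 : ∑ i, w i = 1)
    (Sig R : Matrix (Fin d) (Fin d) ℝ) (hSig : Sig.PosDef)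
    (hR : Sig = R * Rᵀ) (hRdet : IsUnit R.det)
    (μ μ' : Fin d → ℝ)
    (δ : Fin n → ℝ) (hδ : ∀ i, δ i = (x i - μ) ⬝ᵥ Sig⁻¹ *ᵥ (x i - μ))
    (hupd : μ' = (∑ i, w i / (ν + δ i))⁻¹ • ∑ i, (w i / (ν + δ i)) • x i)
    (L : (Fin d → ℝ) → Matrix (Fin d) (Fin d) ℝ → ℝ)
    (hL : ∀ (m : Fin d → ℝ) (M : Matrix (Fin d) (Fin d) ℝ),
      L m M = ((d : ℝ) + ν) * (∑ i, w i * Real.log (ν + (x i - m) ⬝ᵥ M⁻¹ *ᵥ (x i - m)))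
        + Real.log M.det)
    (S0 : ℝ) (hS0 : S0 = ((d : ℝ) + ν) * ∑ i, w i / (ν + δ i))
    (S1 : Fin d → ℝ)
    (hS1 : S1 = ((d : ℝ) + ν) • ∑ i, (w i / (ν + δ i)) • (R⁻¹ *ᵥ (x i - μ))) :
    L μ' Sig - L μ Sig ≤ ((d : ℝ) + ν) * Real.log (1 - (S1 ⬝ᵥ S1) / (((d : ℝ) + ν) * S0)) ∧
    ((d : ℝ) + ν) * Real.log (1 - (S1 ⬝ᵥ S1) / (((d : ℝ) + ν) * S0)) ≤ 0 ∧
    (L μ' Sig = L μ Sig ↔ μ' = μ) :=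
  gmmf_location_update_descent_general d n ν hν x w hw hw1 Sig R hR hRdet μ μ' δ hδ hupd L hL S0 hS0
    S1 hS1
end

section
/- The Student-t negative weighted log-likelihood in location-scatter form lifts to a pure scatter problem in dimension d+1: with z_i = (x_i^T,1)^T and A = [[Σ+μμ^T, μ],[μ^T,1]], one has, for ν > 1, L(μ,Σ) = (d̃+ν̃)∑_i w_i log(ν̃ + z_i^T A^{-1} z_i) + log|A| where d̃ = d+1 and ν̃ = ν-1. -/
open Real Matrix Finset

/-!
With `ν̃ = ν - 1` and `d̃ = d + 1` the prefactor `d̃ + ν̃` equals `d + ν`, so it suffices that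
`log |A| = log |Σ|` and `ν̃ + zᵢᵀA⁻¹zᵢ = ν + (xᵢ - μ)ᵀΣ⁻¹(xᵢ - μ)`. The Schur complement of the
unit corner of `A` is `Σ`, which gives the determinant. For the quadratic form, `zᵢ = A yᵢ` with
`yᵢ = (Σ⁻¹(xᵢ - μ), 1 - μᵀΣ⁻¹(xᵢ - μ))`, hence `zᵢᵀA⁻¹zᵢ = zᵢᵀyᵢ = 1 + (xᵢ - μ)ᵀΣ⁻¹(xᵢ - μ)`.
-/

namespace Matrix

def scatterLift {m α : Type*} [Semiring α] (ι : Type*) [DecidableEq ι] (S : Matrix m m α)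
    (μ : m → α) : Matrix (m ⊕ ι) (m ⊕ ι) α :=
  fromBlocks (S + vecMulVec μ μ) (replicateCol ι μ) (replicateRow ι μ) 1

variable {m ι α : Type*} [Fintype m] [Fintype ι] [Unique ι] [DecidableEq ι] [CommRing α]

theorem scatterLift_mulVec_sumElim (S : Matrix m m α) (μ v : m → α) (t : α) :
    scatterLift ι S μ *ᵥ Sum.elim v (fun _ => t) =
      Sum.elim (S *ᵥ v + (μ ⬝ᵥ v + t) • μ) (fun _ => μ ⬝ᵥ v + t) := by
  rw [scatterLift, fromBlocks_mulVec]
  congr 1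
  · have hcol : replicateCol ι μ *ᵥ (fun _ => t) = t • μ := by
      ext
      simp [mulVec, dotProduct, mul_comm]
    rw [Sum.elim_comp_inl, Sum.elim_comp_inr, add_mulVec, vecMulVec_mulVec, hcol,
      op_smul_eq_smul, add_assoc, ← add_smul]
  · ext
    simp [mulVec, dotProduct, replicateRow]

variable [DecidableEq m]

theorem det_scatterLift (S : Matrix m m α) (μ : m → α) : (scatterLift ι S μ).det = S.det := by
  have houter : replicateCol ι μ * replicateRow ι μ = vecMulVec μ μ := by
    ext
    simp [mul_apply, vecMulVec]
  rw [scatterLift, det_fromBlocks_one₂₂, houter, add_sub_cancel_right]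

theorem dotProduct_inv_mulVec_of_mulVec_eq {A : Matrix m m α} (hA : IsUnit A.det) {y z : m → α}
    (h : A *ᵥ y = z) : z ⬝ᵥ A⁻¹ *ᵥ z = z ⬝ᵥ y := by
  rw [← h, mulVec_mulVec, nonsing_inv_mul A hA, one_mulVec]

theorem sumElim_one_dotProduct_inv_scatterLift_mulVec {S : Matrix m m α} (hS : IsUnit S.det)
    (μ x : m → α) :
    Sum.elim x (fun _ : ι => 1) ⬝ᵥ (scatterLift ι S μ)⁻¹ *ᵥ Sum.elim x (fun _ => 1) =
      1 + (x - μ) ⬝ᵥ S⁻¹ *ᵥ (x - μ) := by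
  set q := μ ⬝ᵥ S⁻¹ *ᵥ (x - μ)
  have hsolve : scatterLift ι S μ *ᵥ Sum.elim (S⁻¹ *ᵥ (x - μ)) (fun _ => 1 - q) =
      Sum.elim x (fun _ => 1) := by
    rw [scatterLift_mulVec_sumElim, mulVec_mulVec, mul_nonsing_inv S hS, one_mulVec]
    simp [q]
  have hcorner : (fun _ : ι => (1 : α)) ⬝ᵥ (fun _ => 1 - q) = 1 - q := by simp [dotProduct]
  rw [dotProduct_inv_mulVec_of_mulVec_eq (by rwa [det_scatterLift]) hsolve,
    sumElim_dotProduct_sumElim, hcorner, sub_dotProduct]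
  ring

end Matrix

theorem studentT_likelihood_lift_to_scatter_general
    (d n : ℕ) (ν : ℝ)
    (x : Fin n → Fin d → ℝ)
    (w : Fin n → ℝ)
    (μ : Fin d → ℝ) (Sig : Matrix (Fin d) (Fin d) ℝ) (hSig : Sig.PosDef)
    (A : Matrix (Fin d ⊕ Fin 1) (Fin d ⊕ Fin 1) ℝ)
    (hA : A = Matrix.fromBlocks (Sig + Matrix.vecMulVec μ μ)
      (Matrix.replicateCol (Fin 1) μ) (Matrix.replicateRow (Fin 1) μ) 1)
    (z : Fin n → (Fin d ⊕ Fin 1) → ℝ)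
    (hz : ∀ i, z i = Sum.elim (x i) (fun _ => 1)) :
    ((d : ℝ) + ν) * (∑ i, w i * Real.log (ν + (x i - μ) ⬝ᵥ Sig⁻¹ *ᵥ (x i - μ)))
        + Real.log Sig.det
      = (((d : ℝ) + 1) + (ν - 1)) *
          (∑ i, w i * Real.log ((ν - 1) + z i ⬝ᵥ A⁻¹ *ᵥ z i))
        + Real.log A.det := by
  have hA_lift : A = scatterLift (Fin 1) Sig μ := hA
  have hquad : ∀ i, (ν - 1) + z i ⬝ᵥ A⁻¹ *ᵥ z i = ν + (x i - μ) ⬝ᵥ Sig⁻¹ *ᵥ (x i - μ) := by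
    intro i
    rw [hz, hA_lift, sumElim_one_dotProduct_inv_scatterLift_mulVec hSig.det_pos.ne'.isUnit]
    ring
  simp only [hquad]
  rw [hA_lift, det_scatterLift Sig μ]
  ring

/-- The Student-t negative weighted log-likelihood in location-scatter form lifts
to a pure scatter problem in dimension `d+1`: with `zᵢ = (xᵢᵀ,1)ᵀ` and
`A = [[Σ+μμᵀ, μ],[μᵀ,1]]`, for `ν > 1`,
`L(μ,Σ) = (d̃+ν̃) ∑ᵢ wᵢ log(ν̃ + zᵢᵀA⁻¹zᵢ) + log|A|` with `d̃ = d+1`, `ν̃ = ν-1`. -/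
theorem studentT_likelihood_lift_to_scatter
    (d n : ℕ) (ν : ℝ) (hν : 1 < ν)
    (x : Fin n → Fin d → ℝ)
    (w : Fin n → ℝ) (hw : ∀ i, 0 < w i) (hw1 : ∑ i, w i = 1)
    (μ : Fin d → ℝ) (Sig : Matrix (Fin d) (Fin d) ℝ) (hSig : Sig.PosDef)
    (A : Matrix (Fin d ⊕ Fin 1) (Fin d ⊕ Fin 1) ℝ)
    (hA : A = Matrix.fromBlocks (Sig + Matrix.vecMulVec μ μ)
      (Matrix.replicateCol (Fin 1) μ) (Matrix.replicateRow (Fin 1) μ) 1)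
    (z : Fin n → (Fin d ⊕ Fin 1) → ℝ)
    (hz : ∀ i, z i = Sum.elim (x i) (fun _ => 1)) :
    ((d : ℝ) + ν) * (∑ i, w i * Real.log (ν + (x i - μ) ⬝ᵥ Sig⁻¹ *ᵥ (x i - μ)))
        + Real.log Sig.det
      = (((d : ℝ) + 1) + (ν - 1)) *
          (∑ i, w i * Real.log ((ν - 1) + z i ⬝ᵥ A⁻¹ *ᵥ z i))
        + Real.log A.det :=
  studentT_likelihood_lift_to_scatter_general d n ν x w μ Sig hSig A hA z hz
end

section
/- If (μ,Σ) is a critical point of L (ν > 1), i.e. ∑_i w_i (x_i-μ)/(ν+δ_i) = 0 and Σ = (d+ν)∑_i w_i (x_i-μ)(x_i-μ)^T/(ν+δ_i), then the lifted matrix A = [[Σ+μμ^T, μ],[μ^T,1]] satisfies the (d+1)-dimensional critical point equation A = (d+ν)∑_i w_i z_i z_i^T/(ν-1 + z_i^T A^{-1} z_i) with z_i = (x_i^T,1)^T. -/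
open Real Matrix Finset

/-!
With `T` the homogeneous-coordinate matrix of the translation by `μ`, the lifted matrix factors as
`A = T · diag(Σ, 1) · Tᵀ` and `zᵢ = T (xᵢ - μ, 1)`. Hence `zᵢᵀ A⁻¹ zᵢ = δᵢ + 1`, so the weights in
the lifted equation are the original `wᵢ / (ν + δᵢ)`, and after cancelling `T` the lifted
equation splits into blocks: the scatter equation, the mean equation, and the normalisation
`(d + ν) ∑ wᵢ / (ν + δᵢ) = 1`. The normalisation comes from the trace of `Σ⁻¹ Σ = 1`, which gives
`d = (d + ν) ∑ wᵢ δᵢ / (ν + δᵢ)`, combined with `∑ wᵢ = 1`.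
-/

namespace Matrix

variable {m n ι R : Type*} [CommRing R]

section Congruence

variable [Fintype n]

theorem sum_smul_vecMulVec_mulVec [Fintype ι] (M : Matrix n n R) (c : ι → R) (y : ι → n → R) :
    ∑ i, c i • vecMulVec (M *ᵥ y i) (M *ᵥ y i) = M * (∑ i, c i • vecMulVec (y i) (y i)) * Mᵀ := by
  simp only [Matrix.mul_sum, Matrix.sum_mul, Matrix.mul_smul, Matrix.smul_mul, mul_vecMulVec,
    vecMulVec_mul, vecMul_transpose]

variable [DecidableEq n]

theorem mulVec_dotProduct_inv_mul_mul_transpose_mulVec {M : Matrix n n R} (hM : IsUnit M.det)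
    (D : Matrix n n R) (y : n → R) :
    (M *ᵥ y) ⬝ᵥ (M * D * Mᵀ)⁻¹ *ᵥ (M *ᵥ y) = y ⬝ᵥ D⁻¹ *ᵥ y := by
  have hMy : M⁻¹ *ᵥ (M *ᵥ y) = y := by rw [mulVec_mulVec, nonsing_inv_mul _ hM, one_mulVec]
  rw [mul_inv_rev, mul_inv_rev, ← transpose_nonsing_inv, ← mulVec_mulVec, ← mulVec_mulVec, hMy,
    dotProduct_mulVec, vecMul_transpose, hMy]

theorem card_eq_mul_sum_dotProduct_inv_mulVec [Fintype ι] {S : Matrix n n R} (hS : IsUnit S.det)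
    {a : R} {c : ι → R} {v : ι → n → R} (h : S = a • ∑ i, c i • vecMulVec (v i) (v i)) :
    (Fintype.card n : R) = a * ∑ i, c i * (v i ⬝ᵥ S⁻¹ *ᵥ v i) := by
  calc (Fintype.card n : R) = (S⁻¹ * S).trace := by rw [nonsing_inv_mul _ hS, trace_one]
    _ = a * ∑ i, c i * (v i ⬝ᵥ S⁻¹ *ᵥ v i) := by
      nth_rewrite 2 [h]
      simp only [Matrix.mul_smul, Matrix.mul_sum, trace_smul, trace_sum, mul_vecMulVec,
        trace_vecMulVec, dotProduct_comm (S⁻¹ *ᵥ _), smul_eq_mul]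

end Congruence

theorem sum_smul_vecMulVec_sumElim [Fintype ι] (c : ι → R) (v : ι → m → R) :
    ∑ i, c i • vecMulVec (Sum.elim (v i) (fun _ => 1)) (Sum.elim (v i) (fun _ => 1)) =
      fromBlocks (∑ i, c i • vecMulVec (v i) (v i)) (replicateCol (Fin 1) (∑ i, c i • v i))
        (replicateRow (Fin 1) (∑ i, c i • v i)) ((∑ i, c i) • 1) := by
  ext (j | j) (k | k) <;> simp [Matrix.sum_apply, Finset.sum_apply, vecMulVec_apply,
    Fin.fin_one_eq_zero]

section Translation

variable [Fintype m] [DecidableEq m]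

/-- The matrix `[[1, μ], [0, 1]]` of the translation `v ↦ v + μ` in homogeneous coordinates. -/
def translationMatrix (μ : m → R) : Matrix (m ⊕ Fin 1) (m ⊕ Fin 1) R :=
  fromBlocks 1 (replicateCol (Fin 1) μ) 0 1

theorem det_translationMatrix (μ : m → R) : (translationMatrix μ).det = 1 := by
  simp [translationMatrix]

theorem translationMatrix_mulVec_sumElim (μ v : m → R) :
    translationMatrix μ *ᵥ Sum.elim v (fun _ => 1) = Sum.elim (v + μ) (fun _ => 1) := by
  rw [translationMatrix, fromBlocks_mulVec]
  ext (j | j) <;> simp [mulVec, dotProduct, add_comm]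

theorem translationMatrix_mul_fromBlocks_mul_transpose (S : Matrix m m R) (μ : m → R) :
    translationMatrix μ * fromBlocks S 0 0 1 * (translationMatrix μ)ᵀ =
      fromBlocks (S + vecMulVec μ μ) (replicateCol (Fin 1) μ) (replicateRow (Fin 1) μ) 1 := by
  ext (j | j) (k | k) <;>
    simp [translationMatrix, fromBlocks_transpose, fromBlocks_multiply, mul_apply, vecMulVec_apply,
      one_apply, Fin.fin_one_eq_zero]

theorem sumElim_dotProduct_inv_fromBlocks_mulVec_sumElim {S : Matrix m m R} (hS : IsUnit S)
    (v : m → R) :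
    Sum.elim v (fun _ => 1) ⬝ᵥ (fromBlocks S 0 0 (1 : Matrix (Fin 1) (Fin 1) R))⁻¹ *ᵥ
      Sum.elim v (fun _ => 1) = v ⬝ᵥ S⁻¹ *ᵥ v + 1 := by
  rw [inv_fromBlocks_zero₂₁_of_isUnit_iff _ _ _ (iff_of_true hS isUnit_one)]
  simp [fromBlocks_mulVec, dotProduct]

end Translation

end Matrix

theorem mul_sum_div_add_eq_one {ι K : Type*} [Fintype ι] [Field K] {d ν : K} {w δ : ι → K}
    (hν : ν ≠ 0) (hδ : ∀ i, ν + δ i ≠ 0) (hw : ∑ i, w i = 1)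
    (htr : d = (d + ν) * ∑ i, w i / (ν + δ i) * δ i) :
    (d + ν) * ∑ i, w i / (ν + δ i) = 1 := by
  have hsplit : ν * ∑ i, w i / (ν + δ i) + ∑ i, w i / (ν + δ i) * δ i = 1 := by
    rw [← hw, Finset.mul_sum, ← Finset.sum_add_distrib]
    refine Finset.sum_congr rfl fun i _ => ?_
    field_simp [hδ i]
  apply mul_left_cancel₀ hν
  linear_combination (d + ν) * hsplit + htr

theorem studentT_critical_point_lifts_general
    (d n : ℕ) (ν : ℝ) (hν : 1 < ν)
    (x : Fin n → Fin d → ℝ)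
    (w : Fin n → ℝ) (hw1 : ∑ i, w i = 1)
    (μ : Fin d → ℝ) (Sig : Matrix (Fin d) (Fin d) ℝ) (hSig : Sig.PosDef)
    (δ : Fin n → ℝ) (hδ : ∀ i, δ i = (x i - μ) ⬝ᵥ Sig⁻¹ *ᵥ (x i - μ))
    (hcrit1 : ∑ i, (w i / (ν + δ i)) • (x i - μ) = 0)
    (hcrit2 : Sig = ((d : ℝ) + ν) • ∑ i, (w i / (ν + δ i)) •
      Matrix.vecMulVec (x i - μ) (x i - μ))
    (A : Matrix (Fin d ⊕ Fin 1) (Fin d ⊕ Fin 1) ℝ)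
    (hA : A = Matrix.fromBlocks (Sig + Matrix.vecMulVec μ μ)
      (Matrix.replicateCol (Fin 1) μ) (Matrix.replicateRow (Fin 1) μ) 1)
    (z : Fin n → (Fin d ⊕ Fin 1) → ℝ)
    (hz : ∀ i, z i = Sum.elim (x i) (fun _ => 1)) :
    A = ((d : ℝ) + ν) • ∑ i, (w i / ((ν - 1) + z i ⬝ᵥ A⁻¹ *ᵥ z i)) •
      Matrix.vecMulVec (z i) (z i) := by
  have hSig_det : IsUnit Sig.det := hSig.isUnit.map detMonoidHom
  have hδ_pos (i : Fin n) : 0 < ν + δ i := by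
    have hδ_nonneg := hSig.inv.posSemidef.dotProduct_mulVec_nonneg (x i - μ)
    rw [star_trivial, ← hδ] at hδ_nonneg
    linarith
  have hnorm : ((d : ℝ) + ν) * ∑ i, w i / (ν + δ i) = 1 := by
    refine mul_sum_div_add_eq_one (by positivity) (fun i => (hδ_pos i).ne') hw1 ?_
    simpa [hδ] using card_eq_mul_sum_dotProduct_inv_mulVec hSig_det hcrit2
  have hA_congr : A = translationMatrix μ * fromBlocks Sig 0 0 1 * (translationMatrix μ)ᵀ := by
    rw [hA, translationMatrix_mul_fromBlocks_mul_transpose]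
  have hz_translate (i : Fin n) :
      z i = translationMatrix μ *ᵥ Sum.elim (x i - μ) (fun _ => 1) := by
    rw [hz, translationMatrix_mulVec_sumElim, sub_add_cancel]
  have hdenom (i : Fin n) : ν - 1 + z i ⬝ᵥ A⁻¹ *ᵥ z i = ν + δ i := by
    rw [hz_translate, hA_congr, mulVec_dotProduct_inv_mul_mul_transpose_mulVec
      (by simp [det_translationMatrix]), sumElim_dotProduct_inv_fromBlocks_mulVec_sumElim
      hSig.isUnit, hδ]
    ring
  simp_rw [hdenom, hz_translate]
  rw [hA_congr, sum_smul_vecMulVec_mulVec, ← Matrix.smul_mul, ← Matrix.mul_smul,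
    sum_smul_vecMulVec_sumElim, hcrit1, fromBlocks_smul, ← hcrit2, smul_smul, hnorm,
    replicateCol_zero, replicateRow_zero, smul_zero, smul_zero, one_smul]

/-- If `(μ,Σ)` is a critical point of `L` for `ν > 1` (the two stationarity
equations hold), then the lifted matrix `A = [[Σ+μμᵀ, μ],[μᵀ,1]]` satisfies the
`(d+1)`-dimensional critical point equation
`A = (d+ν) ∑ᵢ wᵢ zᵢzᵢᵀ/(ν-1 + zᵢᵀA⁻¹zᵢ)` with `zᵢ = (xᵢᵀ,1)ᵀ`. -/
theorem studentT_critical_point_lifts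
    (d n : ℕ) (ν : ℝ) (hν : 1 < ν)
    (x : Fin n → Fin d → ℝ)
    (w : Fin n → ℝ) (hw : ∀ i, 0 < w i) (hw1 : ∑ i, w i = 1)
    (μ : Fin d → ℝ) (Sig : Matrix (Fin d) (Fin d) ℝ) (hSig : Sig.PosDef)
    (δ : Fin n → ℝ) (hδ : ∀ i, δ i = (x i - μ) ⬝ᵥ Sig⁻¹ *ᵥ (x i - μ))
    (hcrit1 : ∑ i, (w i / (ν + δ i)) • (x i - μ) = 0)
    (hcrit2 : Sig = ((d : ℝ) + ν) • ∑ i, (w i / (ν + δ i)) •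
      Matrix.vecMulVec (x i - μ) (x i - μ))
    (A : Matrix (Fin d ⊕ Fin 1) (Fin d ⊕ Fin 1) ℝ)
    (hA : A = Matrix.fromBlocks (Sig + Matrix.vecMulVec μ μ)
      (Matrix.replicateCol (Fin 1) μ) (Matrix.replicateRow (Fin 1) μ) 1)
    (z : Fin n → (Fin d ⊕ Fin 1) → ℝ)
    (hz : ∀ i, z i = Sum.elim (x i) (fun _ => 1)) :
    A = ((d : ℝ) + ν) • ∑ i, (w i / ((ν - 1) + z i ⬝ᵥ A⁻¹ *ᵥ z i)) •
      Matrix.vecMulVec (z i) (z i) :=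
  studentT_critical_point_lifts_general d n ν hν x w hw1 μ Sig hSig δ hδ hcrit1 hcrit2 A hA z hz
end
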